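/- For every integer N ≥ 1, every integer n ≥ 0, and every real x ≠ 0, U_n^{(N+1)}(x) = (1/(2^N · N!)) · Σ_{i=1}^{N} a(i,N) · Σ_{l=0}^{n} Σ_{j=0}^{l+i} C(2N+n-l-i-1, n-l) · x^{i+l-2N-n} · (l+i)_i · p_j(x) · p_{l+i-j}(x), where x^{i+l-2N-n} is an integer (possibly negative) power of x. -/

import Mathlib

/-- The falling factorial `(y)_k = y(y-1)⋯(y-k+1)` of a real number, `(y)_0 = 1`. -/
noncomputable def fallingFactorial (y : ℝ) (k : ℕ) : ℝ :=
  ∏ j ∈ Finset.range k, (y - (j : ℝ))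

/-- `D = 1 - 2x·t + t²` as a formal power series in `t` over `ℝ`. -/
noncomputable def Dser (x : ℝ) : PowerSeries ℝ :=
  1 - PowerSeries.C (2 * x) * PowerSeries.X + PowerSeries.X ^ 2

/-- The higher-order Chebyshev polynomial of the second kind `U_n^{(α)}(x)`,
the `n`-th coefficient of `(D⁻¹)^α`. -/
noncomputable def chebU (x : ℝ) (α n : ℕ) : ℝ :=
  PowerSeries.coeff n ((Dser x)⁻¹ ^ α)

/-!
Write `E = x - t`. Since `D' = -2E`, the operator `f ↦ E⁻¹ f'` sends `D^{-(k+1)}` to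
`2(k+1) D^{-(k+2)}`, so applying it `N - 1` times to `D⁻¹` yields `2^N N! D^{-(N+1)}`. Applied to
`E^{-p} (D⁻¹)^{(i)}` it gives `p E^{-(p+2)} (D⁻¹)^{(i)} + E^{-(p+1)} (D⁻¹)^{(i+1)}`, and the
recursion for `a(i,N)` is exactly the bookkeeping of these two terms, whence
`2^N N! D^{-(N+1)} = ∑ a(i,N) E^{-(2N-i)} (D⁻¹)^{(i)}`. The formula is the `n`-th coefficient of
this identity, using `E^{-(m+1)} = ∑ C(m+k,k) x^{-(m+1+k)} t^k` and `D⁻¹ = L²`.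
-/

open PowerSeries Finset

section InvCSubX

variable {K : Type*} [Field K] {x : K}

lemma inv_C_sub_X_eq_C_mul_rescale (hx : x ≠ 0) :
    (C x - X : K⟦X⟧)⁻¹ = C x⁻¹ * rescale x⁻¹ (mk 1) := by
  rw [inv_eq_iff_mul_eq_one (by simpa using hx)]
  have h : C x⁻¹ * (C x - X : K⟦X⟧) = rescale x⁻¹ (1 - X) := by
    simp [rescale_X, mul_sub, ← map_mul, inv_mul_cancel₀ hx]
  rw [mul_comm (C x⁻¹), mul_assoc, h, ← map_mul, mk_one_mul_one_sub_eq_one, map_one]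

lemma coeff_inv_C_sub_X_pow (hx : x ≠ 0) (m k : ℕ) :
    coeff k ((C x - X : K⟦X⟧)⁻¹ ^ (m + 1)) = (m + k).choose k * x⁻¹ ^ (m + 1 + k) := by
  rw [inv_C_sub_X_eq_C_mul_rescale hx, mul_pow, ← map_pow, ← map_pow, mk_one_pow_eq_mk_choose_add,
    coeff_C_mul, coeff_rescale, coeff_mk, Nat.choose_symm_add]
  ring

lemma inv_C_sub_X_mul_derivative_inv_C_sub_X_pow_mul (x : K) (p : ℕ) (f : K⟦X⟧) :
    (C x - X)⁻¹ * d⁄dX K ((C x - X)⁻¹ ^ p * f) =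
      (p : K) • ((C x - X)⁻¹ ^ (p + 2) * f) + (C x - X)⁻¹ ^ (p + 1) * d⁄dX K f := by
  rw [Derivation.leibniz, derivative_pow, derivative_inv', smul_eq_mul, smul_eq_mul,
    smul_eq_C_mul, map_natCast]
  cases p with
  | zero => simp
  | succ p => simp; ring

lemma coeff_inv_C_sub_X_pow_mul_iterate_derivative (hx : x ≠ 0) (m i n : ℕ) (f : K⟦X⟧) :
    coeff n ((C x - X)⁻¹ ^ (m + 1) * (d⁄dX K)^[i] f) =
      ∑ l ∈ range (n + 1), ((m + (n - l)).choose (n - l) * x⁻¹ ^ (m + 1 + (n - l)) *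
        (l + 1).ascFactorial i * coeff (l + i) f) := by
  rw [mul_comm, coeff_mul, Nat.sum_antidiagonal_eq_sum_range_succ_mk]
  refine sum_congr rfl fun l _ => ?_
  rw [coeff_iterate_derivative, coeff_inv_C_sub_X_pow hx]
  ring

end InvCSubX

lemma sum_Icc_smul_add_shift_eq {M : Type*} [AddCommGroup M] [Module ℝ M] (a : ℕ → ℕ → ℝ)
    {N : ℕ} (hN : 1 ≤ N) (h1 : a 1 (N + 1) = (2 * (N : ℝ) - 1) * a 1 N)
    (hdiag : a (N + 1) (N + 1) = a N N)
    (hrec : ∀ i, 2 ≤ i → i ≤ N → a i (N + 1) = a (i - 1) N + (2 * (N : ℝ) - i) * a i N)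
    (T : ℕ → M) :
    ∑ i ∈ Icc 1 N, a i N • ((2 * (N : ℝ) - i) • T i + T (i + 1)) =
      ∑ i ∈ Icc 1 (N + 1), a i (N + 1) • T i := by
  have peel_bot : ∀ f : ℕ → M, ∑ i ∈ Icc 1 N, f i = f 1 + ∑ i ∈ Icc 2 N, f i := fun f => by
    rw [← insert_Icc_add_one_left_eq_Icc hN, sum_insert (by simp)]; rfl
  have hshift : ∑ i ∈ Icc 1 N, a i N • T (i + 1) = ∑ i ∈ Icc 2 (N + 1), a (i - 1) N • T i := by
    rw [← map_add_right_Icc 1 N 1, sum_map]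
    simp
  have hmid : ∑ i ∈ Icc 2 N, a i (N + 1) • T i =
      ∑ i ∈ Icc 2 N, a (i - 1) N • T i + ∑ i ∈ Icc 2 N, ((2 * (N : ℝ) - i) * a i N) • T i := by
    rw [← sum_add_distrib]
    refine sum_congr rfl fun i hi => ?_
    rw [mem_Icc] at hi
    rw [hrec i hi.1 hi.2, add_smul]
  simp only [smul_add, smul_smul, sum_add_distrib, hshift]
  rw [sum_Icc_succ_top (by omega), sum_Icc_succ_top (by omega), peel_bot, peel_bot, hmid, h1, hdiag]
  simp only [mul_comm (a _ N), Nat.cast_one, add_tsub_cancel_right]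
  abel

section Dser

variable {x : ℝ}

lemma constantCoeff_Dser (x : ℝ) : constantCoeff (Dser x) = 1 := by simp [Dser]

lemma derivative_Dser (x : ℝ) : d⁄dX ℝ (Dser x) = -2 * (C x - X) := by
  rw [Dser, ← smul_eq_C_mul, map_add, map_sub, Derivation.map_one_eq_zero, Derivation.map_smul,
    derivative_X, derivative_pow, derivative_X, smul_eq_C_mul, map_mul, map_ofNat C 2]
  ring

lemma inv_C_sub_X_mul_derivative_inv_Dser_pow (hx : x ≠ 0) (k : ℕ) :
    (C x - X)⁻¹ * d⁄dX ℝ ((Dser x)⁻¹ ^ (k + 1)) = (2 * (k + 1) : ℝ) • (Dser x)⁻¹ ^ (k + 2) := by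
  have hE : (C x - X : ℝ⟦X⟧)⁻¹ * (C x - X) = 1 := PowerSeries.inv_mul_cancel _ (by simpa using hx)
  rw [derivative_pow, derivative_inv', derivative_Dser, smul_eq_C_mul]
  simp only [map_mul, map_ofNat, map_add, map_natCast, map_one, Nat.cast_add, Nat.cast_one,
    add_tsub_cancel_right]
  linear_combination (2 * ((k : ℝ⟦X⟧) + 1) * (Dser x)⁻¹ ^ (k + 2)) * hE

theorem smul_inv_Dser_pow_eq_sum (hx : x ≠ 0) (a : ℕ → ℕ → ℝ) (ha11 : a 1 1 = 1)
    (ha1 : ∀ N : ℕ, 1 ≤ N → a 1 (N + 1) = (2 * (N : ℝ) - 1) * a 1 N)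
    (hadiag : ∀ N : ℕ, 1 ≤ N → a (N + 1) (N + 1) = a N N)
    (harec : ∀ N i : ℕ, 2 ≤ i → i ≤ N →
      a i (N + 1) = a (i - 1) N + (2 * (N : ℝ) - (i : ℝ)) * a i N)
    {N : ℕ} (hN : 1 ≤ N) :
    ((2 : ℝ) ^ N * N.factorial) • (Dser x)⁻¹ ^ (N + 1) =
      ∑ i ∈ Icc 1 N, a i N • ((C x - X)⁻¹ ^ (2 * N - i) * (d⁄dX ℝ)^[i] (Dser x)⁻¹) := by
  induction N, hN using Nat.le_induction with
  | base =>
    simpa [ha11] using (inv_C_sub_X_mul_derivative_inv_Dser_pow hx 0).symm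
  | succ N hN ih =>
    set T : ℕ → ℝ⟦X⟧ := fun i => (C x - X)⁻¹ ^ (2 * (N + 1) - i) * (d⁄dX ℝ)^[i] (Dser x)⁻¹
    calc ((2 : ℝ) ^ (N + 1) * (N + 1).factorial) • (Dser x)⁻¹ ^ (N + 1 + 1)
        = ((2 : ℝ) ^ N * N.factorial) • ((C x - X)⁻¹ * d⁄dX ℝ ((Dser x)⁻¹ ^ (N + 1))) := by
          rw [inv_C_sub_X_mul_derivative_inv_Dser_pow hx, smul_smul, Nat.factorial_succ]
          push_cast
          ring_nf
      _ = (C x - X)⁻¹ * d⁄dX ℝ (((2 : ℝ) ^ N * N.factorial) • (Dser x)⁻¹ ^ (N + 1)) := by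
          rw [Derivation.map_smul, mul_smul_comm]
      _ = ∑ i ∈ Icc 1 N, a i N • ((2 * (N : ℝ) - i) • T i + T (i + 1)) := by
          rw [ih, map_sum, mul_sum]
          refine sum_congr rfl fun i hi => ?_
          rw [mem_Icc] at hi
          rw [Derivation.map_smul, mul_smul_comm, inv_C_sub_X_mul_derivative_inv_C_sub_X_pow_mul,
            ← Function.iterate_succ_apply' (d⁄dX ℝ)]
          simp only [T]
          rw [Nat.cast_sub (by omega), show 2 * (N + 1) - i = 2 * N - i + 2 by omega,
            show 2 * (N + 1) - (i + 1) = 2 * N - i + 1 by omega]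
          push_cast
          rfl
      _ = ∑ i ∈ Icc 1 (N + 1), a i (N + 1) • T i :=
          sum_Icc_smul_add_shift_eq a hN (ha1 N hN) (hadiag N hN) (harec N) T

end Dser

lemma fallingFactorial_natCast_add_self (l i : ℕ) :
    fallingFactorial ((l : ℝ) + i) i = (l + 1).ascFactorial i := by
  rw [fallingFactorial, Nat.ascFactorial_eq_prod_range, Nat.cast_prod, ← prod_range_reflect]
  refine prod_congr rfl fun j hj => ?_
  rw [mem_range] at hj
  push_cast [Nat.sub_sub, Nat.cast_sub (by omega : 1 + j ≤ i)]
  ring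

lemma coeff_sq {R : Type*} [CommSemiring R] (f : R⟦X⟧) (k : ℕ) :
    coeff k (f ^ 2) = ∑ j ∈ range (k + 1), coeff j f * coeff (k - j) f := by
  rw [sq, coeff_mul, Nat.sum_antidiagonal_eq_sum_range_succ_mk]

lemma coeff_inv_C_sub_X_pow_mul_iterate_derivative_sq {x : ℝ} (hx : x ≠ 0) (L : ℝ⟦X⟧)
    {N i : ℕ} (hi : i < 2 * N) (n : ℕ) :
    coeff n ((C x - X)⁻¹ ^ (2 * N - i) * (d⁄dX ℝ)^[i] (L ^ 2)) =
      ∑ l ∈ range (n + 1), ∑ j ∈ range (l + i + 1),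
        (Nat.choose (2 * N + n - l - i - 1) (n - l) : ℝ) *
          x ^ ((i : ℤ) + (l : ℤ) - 2 * (N : ℤ) - (n : ℤ)) *
          fallingFactorial ((l : ℝ) + (i : ℝ)) i * coeff j L * coeff (l + i - j) L := by
  obtain ⟨m, hm⟩ : ∃ m, 2 * N - i = m + 1 := ⟨2 * N - i - 1, by omega⟩
  rw [hm, coeff_inv_C_sub_X_pow_mul_iterate_derivative hx]
  refine sum_congr rfl fun l hl => ?_
  rw [mem_range] at hl
  have hpow : x⁻¹ ^ (m + 1 + (n - l)) = x ^ ((i : ℤ) + (l : ℤ) - 2 * (N : ℤ) - (n : ℤ)) := by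
    rw [inv_pow, ← zpow_natCast, ← zpow_neg]
    congr 1
    omega
  rw [coeff_sq, mul_sum, fallingFactorial_natCast_add_self, hpow,
    show 2 * N + n - l - i - 1 = m + (n - l) by omega]
  refine sum_congr rfl fun j _ => ?_
  ring

theorem stmt7
    (a : ℕ → ℕ → ℝ)
    (ha11 : a 1 1 = 1)
    (ha1 : ∀ N : ℕ, 1 ≤ N → a 1 (N + 1) = (2 * (N : ℝ) - 1) * a 1 N)
    (hadiag : ∀ N : ℕ, 1 ≤ N → a (N + 1) (N + 1) = a N N)
    (harec : ∀ N i : ℕ, 2 ≤ i → i ≤ N →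
      a i (N + 1) = a (i - 1) N + (2 * (N : ℝ) - (i : ℝ)) * a i N)
    (x : ℝ) (hx : x ≠ 0)
    (L : PowerSeries ℝ)
    (hL : L ^ 2 * Dser x = 1)
    (N n : ℕ) (hN : 1 ≤ N) :
    chebU x (N + 1) n =
      (1 / (2 ^ N * (Nat.factorial N : ℝ))) *
        ∑ i ∈ Finset.Icc 1 N, a i N *
          ∑ l ∈ Finset.range (n + 1), ∑ j ∈ Finset.range (l + i + 1),
            (Nat.choose (2 * N + n - l - i - 1) (n - l) : ℝ) *
              x ^ ((i : ℤ) + (l : ℤ) - 2 * (N : ℤ) - (n : ℤ)) *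
              fallingFactorial ((l : ℝ) + (i : ℝ)) i *
              PowerSeries.coeff j L * PowerSeries.coeff (l + i - j) L := by
  have hDinv : (Dser x)⁻¹ = L ^ 2 :=
    ((eq_inv_iff_mul_eq_one (by simp [constantCoeff_Dser])).2 hL).symm
  have key := congrArg (coeff n) (smul_inv_Dser_pow_eq_sum hx a ha11 ha1 hadiag harec hN)
  rw [coeff_smul, map_sum, smul_eq_mul] at key
  rw [sum_congr rfl fun i hi => by
    rw [coeff_smul, hDinv, coeff_inv_C_sub_X_pow_mul_iterate_derivative_sq hx L
      (by rw [mem_Icc] at hi; omega), smul_eq_mul]] at key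
  rw [chebU, ← key, ← mul_assoc, one_div, inv_mul_cancel₀ (by positivity), one_mul]
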